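/- Let (λ_k)_{k∈ℤ} be points of ℂ∖{0} with (λ_k − λ_{k,0})_{k∈ℤ} ∈ ℓ²_{−1,3}, and let (μ_k)_{k∈ℤ} be points of ℂ∖{0} with ∑_{k∈ℤ} |μ_k − (−1)^k|² < ∞. Then for all sequences (δλ_k)_{k∈ℤ}, (δ̃λ_k)_{k∈ℤ} ∈ ℓ²_{−1,3} and all sequences (δμ_k)_{k∈ℤ}, (δ̃μ_k)_{k∈ℤ} with ∑_{k∈ℤ} |δμ_k|² < ∞ and ∑_{k∈ℤ} |δ̃μ_k|² < ∞, the series ∑_{k∈ℤ} ((δλ_k/λ_k)·(δ̃μ_k/μ_k) − (δ̃λ_k/λ_k)·(δμ_k/μ_k)) converges absolutely. (Hence the symplectic form Ω̃ on the tangent space of the space of asymptotic divisors is well-defined.) -/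

import Mathlib

/-! Writing `y = 2πk`, one has `λ_{k,0} = (y + √(y² - 1))²`, so `λ_{k,0} ≥ 4π²k²` for `k ≥ 1`, while
for `k ≤ -1` it is the reciprocal of `(|y| + √(y² - 1))² ≤ 16π²k²`. A perturbation in `ℓ²_{-1,3}`
is eventually small against these weighted lower bounds, so `|λ_k| ≳ k` for `k → +∞` and
`|λ_k| ≳ |k|⁻³` for `k → -∞`; hence `δλ / λ ∈ ℓ²` for `δλ ∈ ℓ²_{-1,3}`. Likewise `|μ_k| → 1` gives
`δμ / μ ∈ ℓ²`, and the product of two `ℓ²` sequences is summable. -/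

open Complex

noncomputable section

/-- The lambda-coordinates `λ_{k,0}` of the vacuum spectral divisor. -/
noncomputable def lam0 (k : ℤ) : ℝ :=
  8 * Real.pi ^ 2 * (k : ℝ) ^ 2 + 4 * Real.pi * (k : ℝ) * Real.sqrt (4 * Real.pi ^ 2 * (k : ℝ) ^ 2 - 1) - 1

/-- Membership of a two-sided sequence in `ℓ²_{n,m}`:
`∑_{k≥1} |kⁿ·a_k|² < ∞` and `∑_{k≤−1} ||k|^m·a_k|² < ∞`. -/
def l2seq (n m : ℤ) (a : ℤ → ℂ) : Prop :=
  Summable (fun j : ℕ => (((j : ℝ) + 1) ^ n * ‖a ((j : ℤ) + 1)‖) ^ 2) ∧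
  Summable (fun j : ℕ => (((j : ℝ) + 1) ^ m * ‖a (-((j : ℤ) + 1))‖) ^ 2)

open Filter Topology Real

section Summability

variable {ι : Type*}

theorem tendsto_cofinite_zero_of_summable_sq {f : ι → ℝ} (hf : Summable fun k => f k ^ 2) :
    Tendsto f cofinite (𝓝 0) := by
  rw [tendsto_zero_iff_abs_tendsto_zero]
  have h := (continuous_sqrt.tendsto 0).comp hf.tendsto_cofinite_zero
  simpa only [Function.comp_def, sqrt_sq_eq_abs, Real.sqrt_zero] using h

theorem summable_norm_mul_of_summable_norm_sq {R : Type*} [SeminormedRing R] {f g : ι → R}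
    (hf : Summable fun k => ‖f k‖ ^ 2) (hg : Summable fun k => ‖g k‖ ^ 2) :
    Summable fun k => ‖f k * g k‖ := by
  refine .of_nonneg_of_le (fun _ => norm_nonneg _) (fun k => ?_) ((hf.add hg).div_const 2)
  calc ‖f k * g k‖ ≤ ‖f k‖ * ‖g k‖ := norm_mul_le _ _
    _ ≤ (‖f k‖ ^ 2 + ‖g k‖ ^ 2) / 2 := by linarith [two_mul_le_add_sq ‖f k‖ ‖g k‖]

variable {𝕜 : Type*} [NormedDivisionRing 𝕜] {w : ι → ℝ} {c : ℝ}

theorem eventually_le_mul_norm_of_summable_sq {L M : ι → 𝕜} (hw : ∀ k, 0 ≤ w k) (hc : 0 < c)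
    (hM : ∀ᶠ k in cofinite, c ≤ w k * ‖M k‖)
    (hLM : Summable fun k => (w k * ‖L k - M k‖) ^ 2) :
    ∀ᶠ k in cofinite, c / 2 ≤ w k * ‖L k‖ := by
  filter_upwards [hM, (tendsto_cofinite_zero_of_summable_sq hLM).eventually_lt_const (half_pos hc)]
    with k hMk hsmall
  have htri : ‖M k‖ - ‖L k - M k‖ ≤ ‖L k‖ := by
    have := norm_sub_norm_le (M k) (M k - L k)
    rwa [sub_sub_cancel, norm_sub_rev] at this
  nlinarith [mul_le_mul_of_nonneg_left htri (hw k)]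

theorem summable_norm_div_sq_of_le_mul_norm {d L : ι → 𝕜} (hc : 0 < c)
    (hd : Summable fun k => (w k * ‖d k‖) ^ 2) (hL : ∀ᶠ k in cofinite, c ≤ w k * ‖L k‖) :
    Summable fun k => ‖d k / L k‖ ^ 2 := by
  refine .of_norm_bounded_eventually (hd.div_const (c ^ 2)) ?_
  filter_upwards [hL] with k hk
  have hLpos : 0 < ‖L k‖ := by
    refine (norm_nonneg _).lt_of_ne fun h => ?_
    rw [← h, mul_zero] at hk
    linarith
  have hbound : ‖d k / L k‖ ≤ w k * ‖d k‖ / c := by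
    rw [norm_div, div_le_div_iff₀ hLpos hc]
    nlinarith [norm_nonneg (d k)]
  rw [norm_pow, norm_norm, ← div_pow]
  exact pow_le_pow_left₀ (norm_nonneg _) hbound 2

theorem summable_norm_div_sq_of_summable_norm_sub_sq {d L M : ι → 𝕜} (hM : ∀ k, ‖M k‖ = 1)
    (hLM : Summable fun k => ‖L k - M k‖ ^ 2) (hd : Summable fun k => ‖d k‖ ^ 2) :
    Summable fun k => ‖d k / L k‖ ^ 2 := by
  refine summable_norm_div_sq_of_le_mul_norm (w := 1) (half_pos one_pos) (by simpa using hd) ?_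
  exact eventually_le_mul_norm_of_summable_sq (M := M) (fun _ => zero_le_one) one_pos
    (.of_forall fun k => by simp [hM]) (by simpa using hLM)

end Summability

theorem l2seq.summable_norm_div_sq {n m : ℤ} {c : ℝ} {d L : ℤ → ℂ} (M : ℤ → ℂ) (hc : 0 < c)
    (hMpos : ∀ j : ℕ, c ≤ ((j : ℝ) + 1) ^ n * ‖M ((j : ℤ) + 1)‖)
    (hMneg : ∀ j : ℕ, c ≤ ((j : ℝ) + 1) ^ m * ‖M (-((j : ℤ) + 1))‖)
    (hLM : l2seq n m fun k => L k - M k) (hd : l2seq n m d) :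
    Summable fun k => ‖d k / L k‖ ^ 2 := by
  have hw (p : ℤ) (j : ℕ) : 0 ≤ ((j : ℝ) + 1) ^ p := by positivity
  refine .of_add_one_of_neg_add_one ?_ ?_
  · exact summable_norm_div_sq_of_le_mul_norm (half_pos hc) hd.1
      (eventually_le_mul_norm_of_summable_sq (L := fun j : ℕ => L (j + 1)) (hw n) hc
        (.of_forall hMpos) hLM.1)
  · exact summable_norm_div_sq_of_le_mul_norm (half_pos hc) hd.2
      (eventually_le_mul_norm_of_summable_sq (L := fun j : ℕ => L (-(j + 1))) (hw m) hc
        (.of_forall hMneg) hLM.2)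

theorem lam0_eq_sq {k : ℤ} (hk : k ≠ 0) :
    lam0 k = (2 * π * k + √(4 * π ^ 2 * k ^ 2 - 1)) ^ 2 := by
  have hk2 : (1 : ℝ) ≤ (k : ℝ) ^ 2 := by
    exact_mod_cast one_le_sq_iff_one_le_abs _ |>.mpr (Int.one_le_abs hk)
  have hrad : 0 ≤ 4 * π ^ 2 * (k : ℝ) ^ 2 - 1 := by nlinarith [pi_gt_three]
  rw [lam0, add_sq, sq_sqrt hrad]
  ring

theorem sq_two_pi_mul_le_lam0 {k : ℤ} (hk : 0 < k) : (2 * π * k) ^ 2 ≤ lam0 k := by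
  rw [lam0_eq_sq hk.ne']
  have : (0 : ℝ) ≤ 2 * π * k := by positivity
  gcongr
  exact le_add_of_nonneg_right (sqrt_nonneg _)

theorem one_le_lam0_neg_mul_sq {k : ℤ} (hk : 0 < k) : 1 ≤ lam0 (-k) * (4 * π * k) ^ 2 := by
  set y : ℝ := 2 * π * k
  have hy : 1 ≤ y := by
    have : (1 : ℝ) ≤ k := by exact_mod_cast hk
    nlinarith [pi_gt_three]
  set s := √(y ^ 2 - 1)
  have hs : s ^ 2 = y ^ 2 - 1 := sq_sqrt (by nlinarith)
  have hs0 : 0 ≤ s := sqrt_nonneg _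
  have hsy : s ≤ y := by nlinarith
  have hlam : lam0 (-k) = (s - y) ^ 2 := by
    have harg : 4 * π ^ 2 * ((-k : ℤ) : ℝ) ^ 2 - 1 = y ^ 2 - 1 := by push_cast; ring
    rw [lam0_eq_sq (neg_ne_zero.mpr hk.ne'), harg]
    push_cast
    ring
  have hprod : (s - y) ^ 2 * (s + y) ^ 2 = 1 := by
    rw [← mul_pow]; nlinarith
  have h4 : (4 * π * k) ^ 2 = (2 * y) ^ 2 := by ring
  rw [hlam, h4, ← hprod]
  gcongr
  linarith

theorem lam0_succ_lower_bound (j : ℕ) :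
    (16 * π ^ 2)⁻¹ ≤ ((j : ℝ) + 1) ^ (-1 : ℤ) * ‖(lam0 ((j : ℤ) + 1) : ℂ)‖ := by
  have hlam := sq_two_pi_mul_le_lam0 (k := (j : ℤ) + 1) (by omega)
  push_cast at hlam ⊢
  set x : ℝ := (j : ℝ) + 1
  have hx : 1 ≤ x := by simp [x]
  have hπ : 1 ≤ π ^ 2 := by nlinarith [pi_gt_three]
  rw [Complex.norm_real, zpow_neg_one]
  calc (16 * π ^ 2)⁻¹ ≤ 4 * π ^ 2 * x := by
        rw [inv_le_iff_one_le_mul₀ (by positivity)]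
        nlinarith [one_le_mul_of_one_le_of_one_le hπ hx]
    _ = x⁻¹ * (2 * π * x) ^ 2 := by field_simp; ring
    _ ≤ x⁻¹ * ‖lam0 (j + 1)‖ := by gcongr; exact hlam.trans (le_abs_self _)

theorem lam0_neg_succ_lower_bound (j : ℕ) :
    (16 * π ^ 2)⁻¹ ≤ ((j : ℝ) + 1) ^ (3 : ℤ) * ‖(lam0 (-((j : ℤ) + 1)) : ℂ)‖ := by
  have hlam := one_le_lam0_neg_mul_sq (k := (j : ℤ) + 1) (by omega)
  push_cast at hlam ⊢
  set x : ℝ := (j : ℝ) + 1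
  have hx : 1 ≤ x := by simp [x]
  have hlam0 : 0 ≤ lam0 (-(j + 1)) := by
    rw [lam0_eq_sq (by omega)]; positivity
  rw [Complex.norm_real, norm_of_nonneg hlam0, inv_le_iff_one_le_mul₀ (by positivity)]
  calc 1 ≤ lam0 (-(j + 1)) * (4 * π * x) ^ 2 := hlam
    _ ≤ x ^ 3 * lam0 (-(j + 1)) * (16 * π ^ 2) := by nlinarith

theorem Omega_tilde_summable_general (lamDiv μDiv : ℤ → ℂ)
    (hlam : l2seq (-1) 3 (fun k => lamDiv k - (lam0 k : ℂ)))
    (hμ : Summable (fun k : ℤ => ‖μDiv k - (-1 : ℂ) ^ k‖ ^ 2))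
    (dlam dlam' : ℤ → ℂ)
    (hdlam : l2seq (-1) 3 dlam) (hdlam' : l2seq (-1) 3 dlam')
    (dμ dμ' : ℤ → ℂ)
    (hdμ : Summable (fun k : ℤ => ‖dμ k‖ ^ 2))
    (hdμ' : Summable (fun k : ℤ => ‖dμ' k‖ ^ 2)) :
    Summable (fun k : ℤ => ‖
      dlam k / lamDiv k * (dμ' k / μDiv k) - dlam' k / lamDiv k * (dμ k / μDiv k)‖) := by
  have hdivLam {d : ℤ → ℂ} (hd : l2seq (-1) 3 d) : Summable fun k => ‖d k / lamDiv k‖ ^ 2 :=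
    l2seq.summable_norm_div_sq _ (by positivity) lam0_succ_lower_bound
      lam0_neg_succ_lower_bound hlam hd
  have hdivμ {d : ℤ → ℂ} (hd : Summable fun k => ‖d k‖ ^ 2) :
      Summable fun k => ‖d k / μDiv k‖ ^ 2 :=
    summable_norm_div_sq_of_summable_norm_sub_sq (fun k => by simp) hμ hd
  refine .of_nonneg_of_le (fun _ => norm_nonneg _) (fun k => norm_sub_le _ _) (.add ?_ ?_)
  · exact summable_norm_mul_of_summable_norm_sq (hdivLam hdlam) (hdivμ hdμ')
  · exact summable_norm_mul_of_summable_norm_sq (hdivLam hdlam') (hdivμ hdμ)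

/-- The series defining the symplectic form `Ω̃` on the tangent space of the
space of asymptotic divisors converges absolutely. -/
theorem Omega_tilde_summable (lamDiv μDiv : ℤ → ℂ)
    (hlamne : ∀ k, lamDiv k ≠ 0) (hμne : ∀ k, μDiv k ≠ 0)
    (hlam : l2seq (-1) 3 (fun k => lamDiv k - (lam0 k : ℂ)))
    (hμ : Summable (fun k : ℤ => ‖μDiv k - (-1 : ℂ) ^ k‖ ^ 2))
    (dlam dlam' : ℤ → ℂ)
    (hdlam : l2seq (-1) 3 dlam) (hdlam' : l2seq (-1) 3 dlam')
    (dμ dμ' : ℤ → ℂ)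
    (hdμ : Summable (fun k : ℤ => ‖dμ k‖ ^ 2))
    (hdμ' : Summable (fun k : ℤ => ‖dμ' k‖ ^ 2)) :
    Summable (fun k : ℤ => ‖
      dlam k / lamDiv k * (dμ' k / μDiv k) - dlam' k / lamDiv k * (dμ k / μDiv k)‖) :=
  Omega_tilde_summable_general lamDiv μDiv hlam hμ dlam dlam' hdlam hdlam' dμ dμ' hdμ hdμ'

end
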